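/- arXiv:1512.09362 — 5 statements merged into one kernel-verified Lean document; each statement's English description precedes it below -/
import Mathlib

section
/- Let 𝕜 be a complete nontrivially normed field, s ∈ 𝕜, and let g₁, g₂ and the four entries M i j (i, j ∈ {0,1}) of a 2×2 matrix of functions 𝕜 → 𝕜 all be analytic at s. Suppose f_j(z) = g₁(z)·M 0 j (z) + g₂(z)·M 1 j (z) (j = 0, 1) holds for all z in some neighborhood of s, and that M 0 0 (s)·M 1 1 (s) − M 0 1 (s)·M 1 0 (s) ≠ 0. Then for every m ∈ ℕ: (for all k ≤ m, the k-th iterated derivative of f₀ at s and of f₁ at s are both 0) if and only if (for all k ≤ m, the k-th iterated derivative of g₁ at s and of g₂ at s are both 0). -/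
/-!
Analytic functions are smooth, so by Leibniz' rule the functions whose iterated derivatives at
`s` vanish up to order `m` are stable under multiplication by smooth functions and under finite
sums. Hence vanishing passes from `g` to `f = g M`; conversely `g = f M⁻¹` near `s`, and the
entries of `M⁻¹` are smooth at `s` because `det M` does not vanish there.
-/

open Filter Topology Matrix

section

variable {𝕜 : Type*} [NontriviallyNormedField 𝕜] {𝔸 : Type*} [NormedRing 𝔸]
  [NormedAlgebra 𝕜 𝔸] {x : 𝕜} {m : ℕ}

theorem iteratedDeriv_mul_eq_zero_of_forall_le {u v : 𝕜 → 𝔸} (hu : ContDiffAt 𝕜 m u x)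
    (hv : ContDiffAt 𝕜 m v x) (h : ∀ k ≤ m, iteratedDeriv k u x = 0) {k : ℕ} (hk : k ≤ m) :
    iteratedDeriv k (fun z => u z * v z) x = 0 := by
  have hkm : (k : WithTop ℕ∞) ≤ m := by exact_mod_cast hk
  rw [iteratedDeriv_fun_mul (hu.of_le hkm) (hv.of_le hkm)]
  refine Finset.sum_eq_zero fun i hi => ?_
  rw [h i (by grind), mul_zero, zero_mul]

theorem iteratedDeriv_eq_zero_of_eventuallyEq_vecMul {ι κ : Type*} [Fintype ι]
    {u : ι → 𝕜 → 𝔸} {v : κ → 𝕜 → 𝔸} {B : 𝕜 → Matrix ι κ 𝔸} (hu : ∀ i, ContDiffAt 𝕜 m (u i) x)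
    (hB : ∀ i j, ContDiffAt 𝕜 m (fun z => B z i j) x)
    (hv : ∀ᶠ z in 𝓝 x, (v · z) = (u · z) ᵥ* B z) (h : ∀ i, ∀ k ≤ m, iteratedDeriv k (u i) x = 0)
    (j : κ) {k : ℕ} (hk : k ≤ m) : iteratedDeriv k (v j) x = 0 := by
  have hkm : (k : WithTop ℕ∞) ≤ m := by exact_mod_cast hk
  have hvj : v j =ᶠ[𝓝 x] fun z => ∑ i, u i z * B z i j := hv.mono fun z hz => congrFun hz j
  rw [hvj.iteratedDeriv_eq k, iteratedDeriv_fun_sum fun i _ => ((hu i).mul (hB i j)).of_le hkm]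
  exact Finset.sum_eq_zero fun i _ =>
    iteratedDeriv_mul_eq_zero_of_forall_le (hu i) (hB i j) (h i) hk

theorem contDiffAt_inv_fin_two_apply {n : WithTop ℕ∞} {A : 𝕜 → Matrix (Fin 2) (Fin 2) 𝕜}
    (hA : ∀ i j, ContDiffAt 𝕜 n (fun z => A z i j) x) (hdet : (A x).det ≠ 0) (i j : Fin 2) :
    ContDiffAt 𝕜 n (fun z => (A z)⁻¹ i j) x := by
  have hdet_smooth : ContDiffAt 𝕜 n (fun z => (A z).det) x := by
    simp only [det_fin_two]
    fun_prop
  simp only [inv_def, Ring.inverse_eq_inv', adjugate_fin_two, Matrix.smul_apply, smul_eq_mul]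
  fin_cases i <;> fin_cases j <;>
    simp only [Fin.zero_eta, Fin.mk_one, of_apply, cons_val', cons_val_zero, cons_val_one,
      cons_val_fin_one, mul_neg] <;>
    fun_prop (disch := exact hdet)

end

/-- Key calculus step in the proof of Lemma 5.2: simultaneous vanishing of all
Taylor coefficients up to order `m` is preserved when a row vector of analytic
functions is multiplied by a 2×2 matrix of analytic functions whose determinant
does not vanish at the point. -/
theorem iteratedDeriv_vanish_iff_of_matrix_rel
    {𝕜 : Type*} [NontriviallyNormedField 𝕜] [CompleteSpace 𝕜]
    {s : 𝕜} {g₁ g₂ : 𝕜 → 𝕜} {M : Fin 2 → Fin 2 → 𝕜 → 𝕜} {f : Fin 2 → 𝕜 → 𝕜}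
    (hg₁ : AnalyticAt 𝕜 g₁ s) (hg₂ : AnalyticAt 𝕜 g₂ s)
    (hM : ∀ i j, AnalyticAt 𝕜 (M i j) s)
    (hrel : ∀ᶠ z in 𝓝 s, ∀ j, f j z = g₁ z * M 0 j z + g₂ z * M 1 j z)
    (hdet : M 0 0 s * M 1 1 s - M 0 1 s * M 1 0 s ≠ 0) :
    ∀ m : ℕ,
      ((∀ k ≤ m, iteratedDeriv k (f 0) s = 0 ∧ iteratedDeriv k (f 1) s = 0) ↔
        (∀ k ≤ m, iteratedDeriv k g₁ s = 0 ∧ iteratedDeriv k g₂ s = 0)) := by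
  intro m
  set g : Fin 2 → 𝕜 → 𝕜 := ![g₁, g₂]
  set A : 𝕜 → Matrix (Fin 2) (Fin 2) 𝕜 := fun z => Matrix.of fun i j => M i j z
  have hA : ∀ i j, ContDiffAt 𝕜 m (fun z => A z i j) s := fun i j => (hM i j).contDiffAt
  have hg : ∀ i, ContDiffAt 𝕜 m (g i) s := Fin.forall_fin_two.2 ⟨hg₁.contDiffAt, hg₂.contDiffAt⟩
  have hfg : ∀ᶠ z in 𝓝 s, (f · z) = (g · z) ᵥ* A z := hrel.mono fun z hz => funext fun j => by
    simp [hz j, g, A, vecMul, dotProduct, Fin.sum_univ_two]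
  have hdet_ne : ∀ᶠ z in 𝓝 s, (A z).det ≠ 0 := by
    simpa [det_fin_two, A] using
      (((hM 0 0).mul (hM 1 1)).sub ((hM 0 1).mul (hM 1 0))).continuousAt.eventually_ne hdet
  have hgf : ∀ᶠ z in 𝓝 s, (g · z) = (f · z) ᵥ* (A z)⁻¹ := by
    filter_upwards [hfg, hdet_ne] with z hz hz_det
    rw [hz, vecMul_vecMul, mul_nonsing_inv _ (isUnit_iff_ne_zero.2 hz_det), vecMul_one]
  have hf : ∀ j, ContDiffAt 𝕜 m (f j) s := fun j =>
    (((hg₁.mul (hM 0 j)).add (hg₂.mul (hM 1 j))).congr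
      (hrel.mono fun z hz => (hz j).symm)).contDiffAt
  have hA_inv := contDiffAt_inv_fin_two_apply hA hdet_ne.self_of_nhds
  have hpair : ∀ u : Fin 2 → 𝕜 → 𝕜, (∀ k ≤ m, iteratedDeriv k (u 0) s = 0 ∧
      iteratedDeriv k (u 1) s = 0) ↔ ∀ i, ∀ k ≤ m, iteratedDeriv k (u i) s = 0 := fun u => by
    simp only [Fin.forall_fin_two, ← forall_and]
  rw [hpair f, show g₁ = g 0 from rfl, show g₂ = g 1 from rfl, hpair g]
  exact ⟨fun h => iteratedDeriv_eq_zero_of_eventuallyEq_vecMul hf hA_inv hgf h,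
    fun h => iteratedDeriv_eq_zero_of_eventuallyEq_vecMul hg hA hfg h⟩
end

section
/- Let K be a field, let g₁, g₂ ∈ K[[T]] be formal power series, and let M be a 2×2 matrix with entries in K[[T]] such that the constant coefficient of det M is nonzero. Define (f₀, f₁) to be the row vector–matrix product (g₁, g₂)·M, i.e. f_j = g₁·(M 0 j) + g₂·(M 1 j). Then min(order of f₀, order of f₁) = min(order of g₁, order of g₂). -/
/-!
Every coordinate of `g ᵥ* M` is a combination `∑ i, g i * M i j`, so its order is at least the
least order among the `g i`. When `det M` is a unit (for a field `K` this is exactly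
`constantCoeff (det M) ≠ 0`), `M` is invertible and `g = (g ᵥ* M) ᵥ* M⁻¹`, which gives the
reverse inequality.
-/

open PowerSeries Matrix

section

variable {R ι ι' : Type*} [Fintype ι]

theorem PowerSeries.le_order_vecMul [Semiring R] {c : ℕ∞} {g : ι → R⟦X⟧}
    (hg : ∀ i, c ≤ (g i).order) (M : Matrix ι ι' R⟦X⟧) (j : ι') : c ≤ ((g ᵥ* M) j).order :=
  Finset.sum_induction _ (fun φ : R⟦X⟧ => c ≤ φ.order)
    (fun _ _ ha hb => (le_min ha hb).trans (min_order_le_order_add _ _)) (by simp)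
    (fun i _ => (hg i).trans (le_self_add.trans (le_order_mul _ _)))

theorem PowerSeries.iInf_order_le_iInf_order_vecMul [Semiring R] (g : ι → R⟦X⟧)
    (M : Matrix ι ι' R⟦X⟧) : ⨅ i, (g i).order ≤ ⨅ j, ((g ᵥ* M) j).order :=
  le_iInf <| le_order_vecMul (iInf_le _) M

theorem PowerSeries.iInf_order_vecMul_of_isUnit_det [CommRing R] [DecidableEq ι]
    (g : ι → R⟦X⟧) {M : Matrix ι ι R⟦X⟧} (hM : IsUnit M.det) :
    ⨅ j, ((g ᵥ* M) j).order = ⨅ i, (g i).order :=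
  le_antisymm
    (by simpa [vecMul_vecMul, mul_nonsing_inv M hM] using
      iInf_order_le_iInf_order_vecMul (g ᵥ* M) M⁻¹)
    (iInf_order_le_iInf_order_vecMul g M)

end

/-- Formal power series form of Lemma 5.2 / Corollary 5.3: the minimal order of a
pair of power series is unchanged under multiplication by a 2×2 matrix of power
series whose determinant has nonzero constant coefficient. -/
theorem min_order_eq_of_matrix_mul
    {K : Type*} [Field K] (g₁ g₂ : PowerSeries K)
    (M : Matrix (Fin 2) (Fin 2) (PowerSeries K))
    (hdet : PowerSeries.constantCoeff M.det ≠ 0)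
    (f : Fin 2 → PowerSeries K)
    (hf : ∀ j, f j = g₁ * M 0 j + g₂ * M 1 j) :
    min (f 0).order (f 1).order = min g₁.order g₂.order := by
  have hf_vecMul : f = ![g₁, g₂] ᵥ* M :=
    funext fun j => by simp [hf, vecMul, dotProduct, Fin.sum_univ_two]
  have hM : IsUnit M.det := isUnit_iff_constantCoeff.mpr hdet.isUnit
  simpa [hf_vecMul, ← Finset.inf_univ_eq_iInf, Fin.univ_succ] using
    iInf_order_vecMul_of_isUnit_det ![g₁, g₂] hM
end

section
/- Let 𝕜 be a complete nontrivially normed field, s ∈ 𝕜, a ∈ 𝕜, and c ∈ 𝕜 with c ≠ 0. Let φ, g₁, g₂ : 𝕜 → 𝕜 be analytic at s with φ(s) = 0 and deriv φ s ≠ 0. Define f₁(z) = a·g₁(z) − φ(z)·g₂(z) and f₂(z) = c·g₁(z). Set d := min(ord_s f₁, ord_s f₂) and e := min(ord_s g₁, ord_s g₂), both in ℕ∞. Then d = e or d = e + 1. -/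
/-!
Put `u = a * g₁` and `v = φ * g₂`, so `f₁ = u - v`. Since `φ` has a simple zero, `ord v = ord g₂ + 1`,
while `ord u ≥ ord g₁ = ord f₂`. Because `v = u - f₁` as well as `f₁ = u - v`, the orders of `f₁`
and `v` agree once truncated at any level `≤ ord u`, in particular at `ord g₁`. Hence
`d = min (ord g₂ + 1) (ord g₁)`, which is `e` or `e + 1`.
-/

theorem ENat.min_add_one_eq_or (m n : ℕ∞) :
    min (m + 1) n = min m n ∨ min (m + 1) n = min m n + 1 := by
  rcases le_or_gt n m with hnm | hmn
  · left
    rw [min_eq_right hnm, min_eq_right (hnm.trans le_self_add)]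
  · right
    rw [min_eq_left (Order.add_one_le_of_lt hmn), min_eq_left hmn.le]

section

variable {𝕜 E : Type*} [NontriviallyNormedField 𝕜] [NormedAddCommGroup E] [NormedSpace 𝕜 E]
  {f g : 𝕜 → E} {z₀ : 𝕜}

theorem min_analyticOrderAt_sub_eq_of_le {t : ℕ∞} (ht : t ≤ analyticOrderAt f z₀) :
    min (analyticOrderAt (f - g) z₀) t = min (analyticOrderAt g z₀) t := by
  have key : min (analyticOrderAt (f - g) z₀) (analyticOrderAt f z₀) =
      min (analyticOrderAt g z₀) (analyticOrderAt f z₀) := by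
    refine le_antisymm (le_min ?_ (min_le_right _ _)) (le_min ?_ (min_le_right _ _))
    · simpa [min_comm] using le_analyticOrderAt_sub (f := f) (g := f - g) (z₀ := z₀)
    · simpa [min_comm] using le_analyticOrderAt_sub (f := f) (g := g) (z₀ := z₀)
  calc min (analyticOrderAt (f - g) z₀) t
      = min (min (analyticOrderAt (f - g) z₀) (analyticOrderAt f z₀)) t := by
        rw [min_assoc, min_eq_right ht]
    _ = min (analyticOrderAt g z₀) t := by rw [key, min_assoc, min_eq_right ht]

end

section

variable {𝕜 : Type*} [NontriviallyNormedField 𝕜] {f : 𝕜 → 𝕜} {z₀ : 𝕜}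

theorem le_analyticOrderAt_const_mul (c : 𝕜) (hf : AnalyticAt 𝕜 f z₀) :
    analyticOrderAt f z₀ ≤ analyticOrderAt (fun z => c * f z) z₀ :=
  (analyticOrderAt_mul (f := fun _ => c) analyticAt_const hf).symm ▸ le_add_self

theorem analyticOrderAt_const_mul {c : 𝕜} (hc : c ≠ 0) (hf : AnalyticAt 𝕜 f z₀) :
    analyticOrderAt (fun z => c * f z) z₀ = analyticOrderAt f z₀ := by
  rw [show (fun z => c * f z) = (fun _ => c) * f from rfl, analyticOrderAt_mul analyticAt_const hf,
    analyticOrderAt_eq_zero.mpr (.inr hc), zero_add]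

end

theorem min_order_matrix_simple_zero_general
    {𝕜 : Type*} [NontriviallyNormedField 𝕜]
    {s a c : 𝕜} (hc : c ≠ 0) {φ g₁ g₂ : 𝕜 → 𝕜}
    (hφ : AnalyticAt 𝕜 φ s) (hφ₀ : φ s = 0) (hφ' : deriv φ s ≠ 0)
    (hg₁ : AnalyticAt 𝕜 g₁ s) (hg₂ : AnalyticAt 𝕜 g₂ s) :
    min (analyticOrderAt (fun z => a * g₁ z - φ z * g₂ z) s) (analyticOrderAt (fun z => c * g₁ z) s) = min (analyticOrderAt g₁ s) (analyticOrderAt g₂ s) ∨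
      min (analyticOrderAt (fun z => a * g₁ z - φ z * g₂ z) s) (analyticOrderAt (fun z => c * g₁ z) s) = min (analyticOrderAt g₁ s) (analyticOrderAt g₂ s) + 1 := by
  have hφg₂ : analyticOrderAt (fun z => φ z * g₂ z) s = analyticOrderAt g₂ s + 1 := by
    rw [show (fun z => φ z * g₂ z) = φ * g₂ from rfl, analyticOrderAt_mul hφ hg₂,
      hφ.analyticOrderAt_eq_one_of_zero_deriv_ne_zero hφ₀ hφ', add_comm]
  have htrunc : min (analyticOrderAt (fun z => a * g₁ z - φ z * g₂ z) s) (analyticOrderAt g₁ s) =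
      min (analyticOrderAt g₂ s + 1) (analyticOrderAt g₁ s) := by
    rw [← hφg₂]
    exact min_analyticOrderAt_sub_eq_of_le (le_analyticOrderAt_const_mul a hg₁)
  rw [analyticOrderAt_const_mul hc hg₁, htrunc, min_comm (analyticOrderAt g₁ s)]
  exact ENat.min_add_one_eq_or _ _

/-- Lemma 5.4 (analytic version): for `f₁ = a·g₁ − φ·g₂` and `f₂ = c·g₁` with `φ`
having a simple zero at `s` and `c ≠ 0`, the minimal order of vanishing of
`(f₁, f₂)` at `s` equals that of `(g₁, g₂)` or that of `(g₁, g₂)` plus 1. -/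
theorem min_order_matrix_simple_zero
    {𝕜 : Type*} [NontriviallyNormedField 𝕜] [CompleteSpace 𝕜]
    {s a c : 𝕜} (hc : c ≠ 0) {φ g₁ g₂ : 𝕜 → 𝕜}
    (hφ : AnalyticAt 𝕜 φ s) (hφ₀ : φ s = 0) (hφ' : deriv φ s ≠ 0)
    (hg₁ : AnalyticAt 𝕜 g₁ s) (hg₂ : AnalyticAt 𝕜 g₂ s)
    (hf₁ : AnalyticAt 𝕜 (fun z => a * g₁ z - φ z * g₂ z) s)
    (hf₂ : AnalyticAt 𝕜 (fun z => c * g₁ z) s) :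
    min (analyticOrderAt (fun z => a * g₁ z - φ z * g₂ z) s) (analyticOrderAt (fun z => c * g₁ z) s) = min (analyticOrderAt g₁ s) (analyticOrderAt g₂ s) ∨
      min (analyticOrderAt (fun z => a * g₁ z - φ z * g₂ z) s) (analyticOrderAt (fun z => c * g₁ z) s) = min (analyticOrderAt g₁ s) (analyticOrderAt g₂ s) + 1 :=
  min_order_matrix_simple_zero_general hc hφ hφ₀ hφ' hg₁ hg₂
end

section
/- Let K be a field, a, c ∈ K with c ≠ 0, and let φ ∈ K[[T]] be a formal power series of order exactly 1 (constant coefficient 0 and nonzero coefficient of T). For g₁, g₂ ∈ K[[T]] define f₁ := a·g₁ − φ·g₂ and f₂ := c·g₁. Set d := min(order of f₁, order of f₂) and e := min(order of g₁, order of g₂), both in ℕ∞. Then d = e or d = e + 1. -/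
/-!
Write `M` for the matrix with rows `(a, -φ)` and `(c, 0)`, so that `f = M g`; its adjugate
`((0, φ), (-c, a))` gives `adj M f = (det M) g = c φ g`. Multiplying a pair of power series by a
matrix of power series cannot lower its minimal order, so `f = M g` gives `e ≤ d` and
`c φ g = adj M f` gives `d ≤ ord (c φ) + e = e + 1`.
-/

open PowerSeries

namespace PowerSeries

theorem min_order_le_order_mul_add_mul {R : Type*} [Semiring R] (u v x y : R⟦X⟧) :
    min x.order y.order ≤ (u * x + v * y).order :=
  calc min x.order y.order
      ≤ min (u * x).order (v * y).order :=
        min_le_min (le_add_self.trans (le_order_mul u x)) (le_add_self.trans (le_order_mul v y))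
    _ ≤ (u * x + v * y).order := min_order_le_order_add _ _

theorem order_C_of_ne_zero {R : Type*} [Semiring R] {a : R} (ha : a ≠ 0) :
    (C a).order = 0 := by
  simpa using order_monomial_of_ne_zero 0 a ha

end PowerSeries

theorem eq_or_eq_add_one_of_le_of_le_add_one {α : Type*} [LinearOrder α] [Add α] [One α]
    [SuccAddOrder α] {d e : α} (hed : e ≤ d) (hde : d ≤ e + 1) : d = e ∨ d = e + 1 := by
  rw [← Order.succ_eq_add_one] at hde ⊢
  rcases Order.le_succ_iff_eq_or_le.mp hde with h | h
  · exact .inr h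
  · exact .inl (h.antisymm hed)

/-- Lemma 5.4 (formal power series version): for `f₁ = a·g₁ − φ·g₂` and
`f₂ = c·g₁` with `φ` of order exactly 1 and `c ≠ 0`, the minimal order of
`(f₁, f₂)` equals that of `(g₁, g₂)` or that of `(g₁, g₂)` plus 1. -/
theorem min_order_matrix_simple_zero_powerSeries
    {K : Type*} [Field K] (a c : K) (hc : c ≠ 0)
    (φ : PowerSeries K) (hφ : φ.order = 1)
    (g₁ g₂ : PowerSeries K)
    (f₁ f₂ : PowerSeries K)
    (hf₁ : f₁ = (PowerSeries.C a) * g₁ - φ * g₂)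
    (hf₂ : f₂ = (PowerSeries.C c) * g₁) :
    min f₁.order f₂.order = min g₁.order g₂.order ∨
      min f₁.order f₂.order = min g₁.order g₂.order + 1 := by
  have hdet : ∀ g : K⟦X⟧, (C c * φ * g).order = 1 + g.order := fun g => by
    rw [order_mul, order_mul, order_C_of_ne_zero hc, hφ, zero_add]
  have lower : min g₁.order g₂.order ≤ min f₁.order f₂.order := by
    refine le_min ?_ ?_
    · simpa [hf₁, sub_eq_add_neg] using min_order_le_order_mul_add_mul (C a) (-φ) g₁ g₂
    · simpa [hf₂] using min_order_le_order_mul_add_mul (C c) 0 g₁ g₂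
  have upper : min f₁.order f₂.order ≤ min g₁.order g₂.order + 1 := by
    have adj₁ : C c * φ * g₁ = 0 * f₁ + φ * f₂ := by rw [hf₂]; ring
    have adj₂ : C c * φ * g₂ = -C c * f₁ + C a * f₂ := by rw [hf₁, hf₂]; ring
    rw [add_comm, ← min_add_add_left, ← hdet, ← hdet, adj₁, adj₂]
    exact le_min (min_order_le_order_mul_add_mul _ _ _ _) (min_order_le_order_mul_add_mul _ _ _ _)
  exact eq_or_eq_add_one_of_le_of_le_add_one lower upper
end

section
/- Let 𝕜 be a complete nontrivially normed field, s ∈ 𝕜, a ∈ 𝕜, c ∈ 𝕜 with c ≠ 0, and let g₁, g₂ : 𝕜 → 𝕜 be analytic at s. Let 𝓜 and Ξ be 2×2 matrices of functions analytic at s whose determinants are nonzero at s, and let C be the 2×2 matrix of functions with rows (z ↦ a, z ↦ c) and (z ↦ −φ(z), z ↦ 0), where φ is analytic at s with φ(s) = 0 and deriv φ s ≠ 0. Define (h₁, h₂) to be the row vector (g₁, g₂) multiplied (pointwise, on a neighborhood of s) by the matrix product 𝓜·C·Ξ. Set d := min(ord_s h₁, ord_s h₂) and e := min(ord_s g₁,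 ord_s g₂). Then d = e or d = e + 1. -/
/-!
Right multiplication of a row vector of functions by a matrix of functions analytic at `s`
can only raise the minimal order of vanishing at `s`; when the determinant is nonzero at `s`
the inverse matrix is again analytic near `s`, so the minimal order is unchanged. Writing
`C = diag(1, φ) · !![a, c; -1, 0]`, whose second factor has determinant `c ≠ 0`, the minimal
order of `(h₁, h₂)` is therefore `min (ord u₁) (ord u₂ + 1)` for `u = (g₁, g₂) · 𝓜`, while
that of `(g₁, g₂)` is `min (ord u₁) (ord u₂)`.
-/

open Filter Topology Matrix

section AnalyticOrderVecMul
variable {𝕜 : Type*} [NontriviallyNormedField 𝕜] {s : 𝕜}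

theorem analyticOrderAt_le_mul {f g : 𝕜 → 𝕜} (hg : AnalyticAt 𝕜 g s) :
    analyticOrderAt f s ≤ analyticOrderAt (f * g) s := by
  by_cases hf : AnalyticAt 𝕜 f s
  · rw [analyticOrderAt_mul hf hg]
    exact le_self_add
  · simp [analyticOrderAt_of_not_analyticAt hf]

theorem Finset.le_analyticOrderAt_sum {ι : Type*} (t : Finset ι) (f : ι → 𝕜 → 𝕜) :
    t.inf (fun i => analyticOrderAt (f i) s) ≤ analyticOrderAt (∑ i ∈ t, f i) s := by
  classical
  induction t using Finset.induction with
  | empty =>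
    rw [Finset.inf_empty, Finset.sum_empty, top_le_iff]
    exact analyticOrderAt_eq_top.2 (Eventually.of_forall fun _ => rfl)
  | insert i t hi ih =>
    rw [Finset.inf_insert, Finset.sum_insert hi]
    exact (min_le_min_left _ ih).trans le_analyticOrderAt_add

variable {ι ι' : Type*} [Fintype ι]

theorem analyticAt_det [DecidableEq ι] {A : 𝕜 → Matrix ι ι 𝕜}
    (hA : ∀ i j, AnalyticAt 𝕜 (fun z => A z i j) s) :
    AnalyticAt 𝕜 (fun z => (A z).det) s := by
  simp_rw [det_apply']
  exact Finset.analyticAt_fun_sum _ fun σ _ =>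
    analyticAt_const.mul (Finset.analyticAt_fun_prod _ fun i _ => hA _ _)

theorem analyticAt_inv_apply [DecidableEq ι] {A : 𝕜 → Matrix ι ι 𝕜}
    (hA : ∀ i j, AnalyticAt 𝕜 (fun z => A z i j) s) (hdet : (A s).det ≠ 0) (i j : ι) :
    AnalyticAt 𝕜 (fun z => (A z)⁻¹ i j) s := by
  simp_rw [inv_def, Ring.inverse_eq_inv', Matrix.smul_apply, adjugate_apply, smul_eq_mul]
  refine ((analyticAt_det hA).inv hdet).mul (analyticAt_det fun k l => ?_)
  simp only [updateRow_apply]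
  split_ifs
  · exact analyticAt_const
  · exact hA k l

theorem analyticAt_mul_apply {κ : Type*} {A : 𝕜 → Matrix ι' ι 𝕜} {B : 𝕜 → Matrix ι κ 𝕜}
    (hA : ∀ i j, AnalyticAt 𝕜 (fun z => A z i j) s)
    (hB : ∀ i j, AnalyticAt 𝕜 (fun z => B z i j) s)
    (i : ι') (k : κ) : AnalyticAt 𝕜 (fun z => (A z * B z) i k) s := by
  simp only [mul_apply]
  exact Finset.analyticAt_fun_sum _ fun j _ => (hA i j).mul (hB j k)

theorem le_analyticOrderAt_vecMul_apply {F : 𝕜 → ι → 𝕜} {A : 𝕜 → Matrix ι ι' 𝕜}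
    (hA : ∀ i j, AnalyticAt 𝕜 (fun z => A z i j) s) (j : ι') :
    ⨅ i, analyticOrderAt (fun z => F z i) s ≤
      analyticOrderAt (fun z => vecMul (F z) (A z) j) s := by
  have hsum : (fun z => vecMul (F z) (A z) j) = ∑ i, (fun z => F z i) * (fun z => A z i j) := by
    ext z
    simp [vecMul, dotProduct]
  rw [hsum, ← Finset.inf_univ_eq_iInf]
  exact (Finset.inf_mono_fun fun i _ => analyticOrderAt_le_mul (hA i j)).trans
    (Finset.univ.le_analyticOrderAt_sum _)

theorem iInf_analyticOrderAt_le_of_vecMul {F : 𝕜 → ι → 𝕜} {G : 𝕜 → ι' → 𝕜}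
    {A : 𝕜 → Matrix ι ι' 𝕜} (hA : ∀ i j, AnalyticAt 𝕜 (fun z => A z i j) s)
    (hG : ∀ᶠ z in 𝓝 s, G z = vecMul (F z) (A z)) :
    ⨅ i, analyticOrderAt (fun z => F z i) s ≤ ⨅ j, analyticOrderAt (fun z => G z j) s :=
  le_iInf fun j => (le_analyticOrderAt_vecMul_apply hA j).trans_eq <|
    analyticOrderAt_congr <| hG.mono fun z hz => by simp [hz]

theorem iInf_analyticOrderAt_eq_of_vecMul [DecidableEq ι] {F G : 𝕜 → ι → 𝕜}
    {A : 𝕜 → Matrix ι ι 𝕜} (hA : ∀ i j, AnalyticAt 𝕜 (fun z => A z i j) s)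
    (hdet : (A s).det ≠ 0) (hG : ∀ᶠ z in 𝓝 s, G z = vecMul (F z) (A z)) :
    ⨅ j, analyticOrderAt (fun z => G z j) s = ⨅ i, analyticOrderAt (fun z => F z i) s := by
  refine le_antisymm ?_ (iInf_analyticOrderAt_le_of_vecMul hA hG)
  have hF : ∀ᶠ z in 𝓝 s, F z = vecMul (G z) (A z)⁻¹ := by
    filter_upwards [hG, (analyticAt_det hA).continuousAt.eventually_ne hdet] with z hz hdz
    rw [hz, vecMul_vecMul, mul_nonsing_inv _ (isUnit_iff_ne_zero.mpr hdz), vecMul_one]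
  exact iInf_analyticOrderAt_le_of_vecMul (analyticAt_inv_apply hA hdet) hF

end AnalyticOrderVecMul

theorem min_add_one_eq_or {α : Type*} [LinearOrder α] [Add α] [One α] [SuccAddOrder α]
    (x y : α) : min x (y + 1) = min x y ∨ min x (y + 1) = min x y + 1 := by
  rcases le_or_gt x y with h | h
  · left
    rw [min_eq_left h, min_eq_left (h.trans (Order.succ_eq_add_one y ▸ Order.le_succ y))]
  · right
    rw [min_eq_right h.le, min_eq_right (Order.add_one_le_of_lt h)]

theorem iInf_fin_two {α : Type*} [CompleteLattice α] (f : Fin 2 → α) :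
    ⨅ i, f i = min (f 0) (f 1) := by
  rw [← Finset.inf_univ_eq_iInf]
  simp [Fin.univ_succ]

theorem min_order_matrix_product_simple_zero_general
    {𝕜 : Type*} [NontriviallyNormedField 𝕜]
    {s a c : 𝕜} (hc : c ≠ 0)
    {g₁ g₂ φ h₁ h₂ : 𝕜 → 𝕜}
    (hg₁ : AnalyticAt 𝕜 g₁ s) (hg₂ : AnalyticAt 𝕜 g₂ s)
    (hφ : AnalyticAt 𝕜 φ s) (hφ₀ : φ s = 0) (hφ' : deriv φ s ≠ 0)
    {M Ξ : 𝕜 → Matrix (Fin 2) (Fin 2) 𝕜}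
    (hM : ∀ i j, AnalyticAt 𝕜 (fun z => M z i j) s)
    (hΞ : ∀ i j, AnalyticAt 𝕜 (fun z => Ξ z i j) s)
    (hMdet : (M s).det ≠ 0) (hΞdet : (Ξ s).det ≠ 0)
    (hrel : ∀ᶠ z in 𝓝 s,
      ![h₁ z, h₂ z] =
        Matrix.vecMul ![g₁ z, g₂ z] (M z * !![a, c; -φ z, 0] * Ξ z)) :
    min (analyticOrderAt h₁ s) (analyticOrderAt h₂ s) = min (analyticOrderAt g₁ s) (analyticOrderAt g₂ s) ∨
      min (analyticOrderAt h₁ s) (analyticOrderAt h₂ s) = min (analyticOrderAt g₁ s) (analyticOrderAt g₂ s) + 1 := by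
  set u : 𝕜 → Fin 2 → 𝕜 := fun z => vecMul ![g₁ z, g₂ z] (M z)
  have hu : ∀ i, AnalyticAt 𝕜 (fun z => u z i) s := fun i => by
    simp only [u, vecMul, dotProduct, Fin.sum_univ_two]
    exact (hg₁.mul (hM 0 i)).add (hg₂.mul (hM 1 i))
  have hug : min (analyticOrderAt (u · 0) s) (analyticOrderAt (u · 1) s) =
      min (analyticOrderAt g₁ s) (analyticOrderAt g₂ s) := by
    simpa [iInf_fin_two] using iInf_analyticOrderAt_eq_of_vecMul
      (F := fun z => ![g₁ z, g₂ z]) hM hMdet (.of_forall fun _ => rfl)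
  have hC : ∀ z, !![a, c; -φ z, 0] = diagonal ![1, φ z] * !![a, c; -1, 0] := fun z => by
    ext i j; fin_cases i <;> fin_cases j <;> simp
  have hhu : min (analyticOrderAt h₁ s) (analyticOrderAt h₂ s) =
      min (analyticOrderAt (u · 0) s) (analyticOrderAt (u · 1) s + 1) := by
    have hdet : (!![a, c; -1, 0] * Ξ s).det ≠ 0 := by
      rw [det_mul, det_fin_two_of]
      simpa [hc] using hΞdet
    have hmin := iInf_analyticOrderAt_eq_of_vecMul (G := fun z => ![h₁ z, h₂ z])
      (F := fun z => vecMul (u z) (diagonal ![1, φ z])) (A := fun z => !![a, c; -1, 0] * Ξ z)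
      (analyticAt_mul_apply (fun _ _ => analyticAt_const) hΞ) hdet
      (hrel.mono fun z hz => by simp only [hz, hC, u, vecMul_vecMul, Matrix.mul_assoc])
    have hφu : analyticOrderAt (fun z => u z 1 * φ z) s = analyticOrderAt (u · 1) s + 1 := by
      rw [← hφ.analyticOrderAt_eq_one_of_zero_deriv_ne_zero hφ₀ hφ']
      exact analyticOrderAt_mul (hu 1) hφ
    simpa [iInf_fin_two, vecMul_diagonal, hφu] using hmin
  rw [hhu, ← hug]
  exact min_add_one_eq_or _ _

/-- Analytic content of Proposition 5.1: if `(h₁, h₂) = (g₁, g₂)·(𝓜·C·Ξ)` near `s`,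
where `𝓜` and `Ξ` are matrices of functions analytic at `s` with determinants
nonvanishing at `s` and `C` has rows `(a, c)` and `(−φ, 0)` with `φ` having a simple
zero at `s` and `c ≠ 0`, then the minimal order of vanishing of `(h₁, h₂)` at `s`
equals that of `(g₁, g₂)` or that of `(g₁, g₂)` plus 1. -/
theorem min_order_matrix_product_simple_zero
    {𝕜 : Type*} [NontriviallyNormedField 𝕜] [CompleteSpace 𝕜]
    {s a c : 𝕜} (hc : c ≠ 0)
    {g₁ g₂ φ h₁ h₂ : 𝕜 → 𝕜}
    (hg₁ : AnalyticAt 𝕜 g₁ s) (hg₂ : AnalyticAt 𝕜 g₂ s)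
    (hφ : AnalyticAt 𝕜 φ s) (hφ₀ : φ s = 0) (hφ' : deriv φ s ≠ 0)
    {M Ξ : 𝕜 → Matrix (Fin 2) (Fin 2) 𝕜}
    (hM : ∀ i j, AnalyticAt 𝕜 (fun z => M z i j) s)
    (hΞ : ∀ i j, AnalyticAt 𝕜 (fun z => Ξ z i j) s)
    (hMdet : (M s).det ≠ 0) (hΞdet : (Ξ s).det ≠ 0)
    (hrel : ∀ᶠ z in 𝓝 s,
      ![h₁ z, h₂ z] =
        Matrix.vecMul ![g₁ z, g₂ z] (M z * !![a, c; -φ z, 0] * Ξ z))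
    (hh₁ : AnalyticAt 𝕜 h₁ s) (hh₂ : AnalyticAt 𝕜 h₂ s) :
    min (analyticOrderAt h₁ s) (analyticOrderAt h₂ s) = min (analyticOrderAt g₁ s) (analyticOrderAt g₂ s) ∨
      min (analyticOrderAt h₁ s) (analyticOrderAt h₂ s) = min (analyticOrderAt g₁ s) (analyticOrderAt g₂ s) + 1 :=
  min_order_matrix_product_simple_zero_general hc hg₁ hg₂ hφ hφ₀ hφ' hM hΞ hMdet hΞdet hrel
end
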